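/- Let d be an integer with 5 ≤ d ≤ 9, set γ = (1/2)(6d - 12 - (d+2)√(2d-4)) and δ = √(d-2)/(2√2), and let g₁(y) = y²/(γ + δ y²). Then g₁ extends smoothly to [0,∞) with g₁(0) = 0, g₁'(0) = 0, and g₁''(0) = 2/γ > 0; moreover g₁(y) → b := 1/δ as y → ∞ and lim_{y→∞} y³ g₁'(y) = 2γ/δ² = -2(d-2) b (b-1)(b-2). Thus g₁ satisfies the boundary conditions characterizing a Yang–Mills shrinker. -/

import Mathlib

/-!
Since `γ, δ > 0`, the denominator of `y² / (γ + δ y²)` never vanishes, so the function is smooth;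
its Taylor data at `0` come from the derivative `2γy / (γ + δy²)²`, and its limits at infinity from
the rewriting `y² / (γ + δ y²) = 1 / (γ y⁻² + δ)`. The dimension enters only through `γ > 0`:
in terms of `u = √(2d - 4)` this reads `3u² > (u²/2 + 4) u`, i.e. `(u - 2)(u - 4) < 0`, which is
`4 < d < 10`. The identity for `2γ/δ²` is polynomial in `√2` and `√(d - 2)`.
-/

open Real Set Filter Topology
open scoped ContDiff

section SqDivConstAddMulSq

variable {γ δ : ℝ}

lemma hasDerivAt_sq_div_const_add_mul_sq (hγ : 0 < γ) (hδ : 0 ≤ δ) (y : ℝ) :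
    HasDerivAt (fun y => y ^ 2 / (γ + δ * y ^ 2)) (2 * γ * y / (γ + δ * y ^ 2) ^ 2) y := by
  have hsq : HasDerivAt (fun y : ℝ => y ^ 2) (2 * y) y := by
    simpa using hasDerivAt_pow 2 y
  have hden : γ + δ * y ^ 2 ≠ 0 := by positivity
  exact (hsq.fun_div ((hsq.const_mul δ).const_add γ) hden).congr_deriv (by field_simp; ring)

lemma deriv_sq_div_const_add_mul_sq (hγ : 0 < γ) (hδ : 0 ≤ δ) :
    deriv (fun y => y ^ 2 / (γ + δ * y ^ 2)) = fun y => 2 * γ * y / (γ + δ * y ^ 2) ^ 2 :=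
  funext fun y => (hasDerivAt_sq_div_const_add_mul_sq hγ hδ y).deriv

lemma contDiff_sq_div_const_add_mul_sq (hγ : 0 < γ) (hδ : 0 ≤ δ) :
    ContDiff ℝ ω (fun y : ℝ => y ^ 2 / (γ + δ * y ^ 2)) :=
  (contDiff_id.pow 2).div (contDiff_const.add (contDiff_const.mul (contDiff_id.pow 2)))
    fun y => by positivity

lemma deriv_deriv_sq_div_const_add_mul_sq_zero (hγ : 0 < γ) (hδ : 0 ≤ δ) :
    deriv (deriv fun y => y ^ 2 / (γ + δ * y ^ 2)) 0 = 2 / γ := by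
  rw [deriv_sq_div_const_add_mul_sq hγ hδ]
  have hnum : HasDerivAt (fun y : ℝ => 2 * γ * y) (2 * γ) 0 := by
    simpa using (hasDerivAt_id (0 : ℝ)).const_mul (2 * γ)
  have hden : HasDerivAt (fun y : ℝ => (γ + δ * y ^ 2) ^ 2) 0 0 := by
    simpa using (((hasDerivAt_pow 2 (0 : ℝ)).const_mul δ).const_add γ).fun_pow 2
  rw [(hnum.fun_div hden (by positivity)).deriv]
  field_simp
  ring

lemma const_mul_inv_sq_add_eq_div {y : ℝ} (hy : y ≠ 0) :
    γ * (y ^ 2)⁻¹ + δ = (γ + δ * y ^ 2) / y ^ 2 := by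
  field_simp

lemma tendsto_const_mul_inv_sq_add_atTop (γ δ : ℝ) :
    Tendsto (fun y : ℝ => γ * (y ^ 2)⁻¹ + δ) atTop (𝓝 δ) := by
  simpa using ((tendsto_pow_atTop two_ne_zero).inv_tendsto_atTop.const_mul γ).add_const δ

lemma tendsto_sq_div_const_add_mul_sq_atTop (hδ : δ ≠ 0) :
    Tendsto (fun y => y ^ 2 / (γ + δ * y ^ 2)) atTop (𝓝 (1 / δ)) := by
  rw [one_div]
  refine ((tendsto_const_mul_inv_sq_add_atTop γ δ).inv₀ hδ).congr' ?_
  filter_upwards [eventually_ne_atTop 0] with y hy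
  rw [const_mul_inv_sq_add_eq_div hy, inv_div]

lemma tendsto_cube_mul_deriv_sq_div_const_add_mul_sq_atTop (hδ : δ ≠ 0) :
    Tendsto (fun y => y ^ 3 * (2 * γ * y / (γ + δ * y ^ 2) ^ 2)) atTop (𝓝 (2 * γ / δ ^ 2)) := by
  refine (tendsto_const_nhds.div ((tendsto_const_mul_inv_sq_add_atTop γ δ).pow 2)
    (pow_ne_zero 2 hδ)).congr' ?_
  filter_upwards [eventually_ne_atTop 0] with y hy
  rw [Pi.div_apply, const_mul_inv_sq_add_eq_div hy, div_pow, div_div_eq_mul_div]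
  ring

end SqDivConstAddMulSq

section ShrinkerConstants

lemma sqrt_two_mul_sub_four (d : ℝ) : √(2 * d - 4) = √2 * √(d - 2) := by
  rw [← Real.sqrt_mul zero_le_two]
  ring_nf

variable {d : ℝ}

lemma shrinker_gamma_pos (hd4 : 4 < d) (hd10 : d < 10) :
    0 < 1 / 2 * (6 * d - 12 - (d + 2) * √(2 * d - 4)) := by
  set u := √(2 * d - 4)
  have hu0 : 0 ≤ u := Real.sqrt_nonneg _
  have hu : u ^ 2 = 2 * d - 4 := Real.sq_sqrt (by linarith)
  have hu2 : 2 < u := by nlinarith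
  have hu4 : u < 4 := by nlinarith
  nlinarith [mul_pos (mul_pos (sub_pos.2 hu2) (sub_pos.2 hu4)) (by linarith : 0 < u)]

lemma shrinker_delta_pos (hd2 : 2 < d) : 0 < √(d - 2) / (2 * √2) := by
  have : 0 < √(d - 2) := Real.sqrt_pos.2 (by linarith)
  positivity

lemma shrinker_asymptotic_identity (hd2 : 2 < d) :
    let γ := 1 / 2 * (6 * d - 12 - (d + 2) * √(2 * d - 4))
    let δ := √(d - 2) / (2 * √2)
    2 * γ / δ ^ 2 = -2 * (d - 2) * (1 / δ) * (1 / δ - 1) * (1 / δ - 2) := by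
  intro γ δ
  obtain ⟨s, hs, rfl⟩ : ∃ s, 0 < s ∧ d = s ^ 2 + 2 :=
    ⟨√(d - 2), Real.sqrt_pos.2 (by linarith), by rw [Real.sq_sqrt (by linarith)]; ring⟩
  have hr2 : √2 ^ 2 = 2 := Real.sq_sqrt zero_le_two
  simp only [γ, δ, sqrt_two_mul_sub_four, add_sub_cancel_right, Real.sqrt_sq hs.le]
  field_simp
  linear_combination (-s ^ 3) * hr2

end ShrinkerConstants

/-- For `5 ≤ d ≤ 9`, the explicit function `g₁(y) = y²/(γ + δ y²)` with
`γ = (1/2)(6d - 12 - (d+2)√(2d-4))`, `δ = √(d-2)/(2√2)` extends smoothly to `[0,∞)` with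
`g₁(0) = 0`, `g₁'(0) = 0`, `g₁''(0) = 2/γ > 0`, `g₁(y) → b := 1/δ` as `y → ∞`, and
`y³ g₁'(y) → 2γ/δ² = -2(d-2) b(b-1)(b-2)`: the boundary conditions of a shrinker. -/
theorem explicit_shrinker_boundary_conditions (d : ℕ) (hd5 : 5 ≤ d) (hd9 : d ≤ 9)
    (γ δ : ℝ)
    (hγ : γ = 1 / 2 * (6 * (d : ℝ) - 12 - ((d : ℝ) + 2) * Real.sqrt (2 * (d : ℝ) - 4)))
    (hδ : δ = Real.sqrt ((d : ℝ) - 2) / (2 * Real.sqrt 2))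
    (g₁ : ℝ → ℝ) (hg₁ : g₁ = fun y => y ^ 2 / (γ + δ * y ^ 2)) :
    ContDiffOn ℝ (⊤ : ℕ∞) g₁ (Ici 0) ∧
    g₁ 0 = 0 ∧
    deriv g₁ 0 = 0 ∧
    deriv (deriv g₁) 0 = 2 / γ ∧
    0 < 2 / γ ∧
    Tendsto g₁ atTop (𝓝 (1 / δ)) ∧
    Tendsto (fun y => y ^ 3 * deriv g₁ y) atTop (𝓝 (2 * γ / δ ^ 2)) ∧
    2 * γ / δ ^ 2 =
      -2 * ((d : ℝ) - 2) * (1 / δ) * (1 / δ - 1) * (1 / δ - 2) := by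
  have hd4 : (4 : ℝ) < d := by exact_mod_cast hd5
  have hd10 : (d : ℝ) < 10 := by exact_mod_cast Nat.lt_succ_of_le hd9
  have hγ0 : 0 < γ := hγ ▸ shrinker_gamma_pos hd4 hd10
  have hδ0 : 0 < δ := hδ ▸ shrinker_delta_pos (by linarith)
  have hderiv := deriv_sq_div_const_add_mul_sq hγ0 hδ0.le
  subst hg₁
  refine ⟨(contDiff_sq_div_const_add_mul_sq hγ0 hδ0.le).contDiffOn.of_le le_top, by simp,
    by simp [hderiv], deriv_deriv_sq_div_const_add_mul_sq_zero hγ0 hδ0.le, by positivity,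
    tendsto_sq_div_const_add_mul_sq_atTop hδ0.ne', ?_, ?_⟩
  · simpa only [hderiv] using tendsto_cube_mul_deriv_sq_div_const_add_mul_sq_atTop hδ0.ne'
  · subst hγ hδ
    exact shrinker_asymptotic_identity (by linarith)
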